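/- For a connected graph Γ, the restriction of the edge functionals (coordinate functions on C_1(Γ,ℝ)) to the cycle space F_Γ = Ker ∂, excluding the bridges (which restrict to zero), forms a unimodular system whose complexity equals the number of spanning trees of Γ. -/

import Mathlib

/-- The boundary map `∂ : C₁(Γ,ℝ) → C₀(Γ,ℝ)` of an oriented graph. -/
noncomputable def bdry {V E : Type*} [Fintype E] (tail head : E → V) [DecidableEq V] :
    (E → ℝ) →ₗ[ℝ] (V → ℝ) :=
  LinearMap.pi fun v =>
    ∑ e : E, (((if head e = v then (1 : ℝ) else 0) - (if tail e = v then 1 else 0)) •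
      LinearMap.proj e)

/-- Connectivity using only edges from the set `T`. -/
def GraphConnVia {V E : Type*} (tail head : E → V) (T : Set E) : Prop :=
  ∀ v w : V, Relation.ReflTransGen
    (fun a b => ∃ e ∈ T, (tail e = a ∧ head e = b) ∨ (tail e = b ∧ head e = a)) v w

/-- A bridge is an edge whose removal disconnects the graph. -/
def IsBridge {V E : Type*} (tail head : E → V) (e : E) : Prop :=
  ¬ GraphConnVia tail head {e' | e' ≠ e}

/-- `S` is a maximal linearly independent subset of the family of forms `ξ`. -/
def MaxLinIndep {ι : Type*} {U : Type*} [AddCommGroup U] [Module ℝ U]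
    (ξ : ι → Module.Dual ℝ U) (S : Set ι) : Prop :=
  LinearIndependent ℝ (fun i : S => ξ i) ∧
    ∀ T : Set ι, S ⊆ T → LinearIndependent ℝ (fun i : T => ξ i) → T = S

/-!
In a connected graph, for `S ⊆ E` the coordinate forms `x ↦ x e` (`e ∈ S`) on the cycle space
are linearly independent iff `E \ S` is connected: each `f ∈ S` closes up to a cycle inside
`E \ S`, and these cycles form a dual family; conversely, if `E \ S` is disconnected, the cut
around a component of `E \ S` is a nontrivial relation among the forms of `S`. They span the
dual iff no nonzero cycle is supported on `E \ S`. A connected edge set `T` carries exactly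
`|T| - |V| + 1` independent cycles, so the maximal independent sets are the complements of
spanning trees. Bridges lie in every spanning tree, and their forms vanish.

Unimodularity comes from fundamental cuts: for a tree edge `f`, the cut around the component
of `head f` in `T \ {f}` contains `f` with coefficient `1` and otherwise only non-tree edges,
so `x f` is an integral combination of the forms of the non-tree edges.
-/

open Relation Submodule

lemma mem_span_int_of_sum_zsmul_eq_zero {ι M : Type*} [Fintype ι] [AddCommGroup M] {φ : ι → M}
    {c : ι → ℤ} (hsum : ∑ i, c i • φ i = 0) {T : Set ι} {f : ι} (hf : c f = 1)
    (hc : ∀ i ∈ T, i ≠ f → c i = 0) : φ f ∈ span ℤ (φ '' Tᶜ) := by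
  classical
  have hrest : ∑ i ∈ Finset.univ.erase f, c i • φ i ∈ span ℤ (φ '' Tᶜ) := by
    refine sum_mem fun i hi => ?_
    by_cases hiT : i ∈ T
    · simp [hc i hiT (Finset.ne_of_mem_erase hi)]
    · exact zsmul_mem (subset_span (Set.mem_image_of_mem φ hiT)) _
  rw [← Finset.add_sum_erase _ _ (Finset.mem_univ f), hf, one_smul] at hsum
  rw [eq_neg_of_add_eq_zero_left hsum]
  exact neg_mem hrest

lemma span_eq_top_iff_forall_apply_eq_zero {K U : Type*} [Field K] [AddCommGroup U] [Module K U]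
    [FiniteDimensional K U] (Φ : Set (Module.Dual K U)) :
    span K Φ = ⊤ ↔ ∀ x : U, (∀ φ ∈ Φ, φ x = 0) → x = 0 := by
  have hco : (span K Φ).dualCoannihilator = ⊥ ↔
      ∀ x : U, (∀ φ ∈ Φ, φ x = 0) → x = 0 := by
    simp only [eq_bot_iff, SetLike.le_def, mem_bot]
    refine forall_congr' fun x => imp_congr_left ?_
    rw [← SetLike.mem_coe, coe_dualCoannihilator_span, Set.mem_ofPred_eq]
  rw [← hco]
  constructor
  · intro h
    rw [h, dualCoannihilator_top]
  · intro h
    rw [← Subspace.dualCoannihilator_dualAnnihilator_eq (W := span K Φ), h, dualAnnihilator_bot]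

lemma maxLinIndep_iff {ι U : Type*} [AddCommGroup U] [Module ℝ U] {ξ : ι → Module.Dual ℝ U}
    {S : Set ι} :
    MaxLinIndep ξ S ↔
      LinearIndepOn ℝ ξ S ∧ span ℝ (ξ '' S) = span ℝ (Set.range ξ) := by
  refine ⟨fun ⟨hS, hmax⟩ => ⟨hS, le_antisymm (span_mono (Set.image_subset_range _ _))
    (span_le.2 ?_)⟩, fun ⟨hS, hspan⟩ => ⟨hS, fun T hST hT => ?_⟩⟩
  · rintro _ ⟨i, rfl⟩
    by_contra hi
    have hiS : i ∉ S := fun h => hi (subset_span ⟨i, h, rfl⟩)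
    have hins := hmax _ (Set.subset_insert i S)
      (linearIndepOn_insert_iff.2 ⟨hS, fun h => absurd h hi⟩)
    exact hiS (hins ▸ Set.mem_insert i S)
  · refine Set.Subset.antisymm (fun t ht => ?_) hST
    have hins := linearIndepOn_insert_iff.1 (LinearIndepOn.mono hT (Set.insert_subset ht hST))
    exact hins.2 (hspan ▸ subset_span ⟨t, rfl⟩)

section Connectivity

variable {V E : Type*} (tail head : E → V)

def AdjVia (T : Set E) (a b : V) : Prop :=
  ∃ e ∈ T, (tail e = a ∧ head e = b) ∨ (tail e = b ∧ head e = a)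

noncomputable def cutVec (A : Set V) (e : E) : ℤ :=
  A.indicator 1 (head e) - A.indicator 1 (tail e)

variable {tail head}

instance (T : Set E) : Std.Symm (AdjVia tail head T) where
  symm _ _ := fun ⟨e, he, h⟩ => ⟨e, he, h.symm⟩

lemma AdjVia.of_mem {T : Set E} {e : E} (he : e ∈ T) : AdjVia tail head T (tail e) (head e) :=
  ⟨e, he, Or.inl ⟨rfl, rfl⟩⟩

lemma mem_of_reflTransGen_adjVia {T : Set E} {A : Set V}
    (hA : ∀ e ∈ T, head e ∈ A ↔ tail e ∈ A) {v w : V} (hv : v ∈ A)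
    (h : ReflTransGen (AdjVia tail head T) v w) : w ∈ A := by
  induction h with
  | refl => exact hv
  | tail _ step ih =>
    obtain ⟨e, he, ⟨rfl, rfl⟩ | ⟨rfl, rfl⟩⟩ := step
    exacts [(hA e he).2 ih, (hA e he).1 ih]

lemma reflTransGen_adjVia_head_iff {T : Set E} {e : E} (he : e ∈ T) {v : V} :
    ReflTransGen (AdjVia tail head T) v (head e) ↔ ReflTransGen (AdjVia tail head T) v (tail e) :=
  ⟨fun h => h.tail (symm_of _ (AdjVia.of_mem he)), fun h => h.tail (AdjVia.of_mem he)⟩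

lemma GraphConnVia.diff_singleton {T : Set E} {f : E} (hT : GraphConnVia tail head T)
    (hf : ReflTransGen (AdjVia tail head (T \ {f})) (head f) (tail f)) :
    GraphConnVia tail head (T \ {f}) := by
  intro v w
  refine ReflTransGen.lift' id (fun a b ⟨e, he, hab⟩ => ?_) v w (hT v w)
  by_cases hef : e = f
  · subst hef
    obtain ⟨rfl, rfl⟩ | ⟨rfl, rfl⟩ := hab
    exacts [symm_of _ hf, hf]
  · exact ReflTransGen.single ⟨e, ⟨he, hef⟩, hab⟩

lemma IsBridge.mem_of_graphConnVia {T : Set E} {e : E} (he : IsBridge tail head e)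
    (hT : GraphConnVia tail head T) : e ∈ T := by
  by_contra heT
  refine he fun v w => ReflTransGen.mono (fun a b ⟨f, hf, hab⟩ => ⟨f, ?_, hab⟩) v w (hT v w)
  rintro rfl
  exact heT hf

lemma IsBridge.not_reflTransGen (hconn : GraphConnVia tail head Set.univ) {f : E}
    (hf : IsBridge tail head f) :
    ¬ ReflTransGen (AdjVia tail head (Set.univ \ {f})) (head f) (tail f) := by
  intro h
  refine hf ?_
  convert hconn.diff_singleton h using 1
  ext e
  simp

lemma cutVec_eq_zero_iff {A : Set V} {e : E} :
    cutVec tail head A e = 0 ↔ (head e ∈ A ↔ tail e ∈ A) := by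
  classical
  simp only [cutVec, Set.indicator_apply, Pi.one_apply]
  split_ifs <;> simp_all

lemma cutVec_eq_one {A : Set V} {e : E} (hh : head e ∈ A) (ht : tail e ∉ A) :
    cutVec tail head A e = 1 := by
  simp [cutVec, hh, ht]

lemma cutVec_reach_eq_zero {T : Set E} {v : V} {e : E} (he : e ∈ T) :
    cutVec tail head {u | ReflTransGen (AdjVia tail head T) v u} e = 0 :=
  cutVec_eq_zero_iff.2 (reflTransGen_adjVia_head_iff he)

end Connectivity

section Boundary

variable {V E : Type*} [Fintype E] [DecidableEq V] {tail head : E → V}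

lemma bdry_apply (x : E → ℝ) (v : V) :
    bdry tail head x v =
      ∑ e, ((if head e = v then (1 : ℝ) else 0) - (if tail e = v then 1 else 0)) * x e := by
  simp [bdry]

lemma bdry_single [DecidableEq E] (e : E) :
    bdry tail head (Pi.single e 1) = Pi.single (head e) 1 - Pi.single (tail e) 1 := by
  ext v
  rw [bdry_apply, Finset.sum_eq_single e (fun f _ hf => by simp [hf]) (by simp)]
  simp [Pi.single_apply, eq_comm]

lemma sum_mul_bdry [Fintype V] (χ : V → ℝ) (x : E → ℝ) :
    ∑ v, χ v * bdry tail head x v = ∑ e, (χ (head e) - χ (tail e)) * x e := by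
  simp only [bdry_apply, Finset.mul_sum]
  rw [Finset.sum_comm]
  refine Finset.sum_congr rfl fun e _ => ?_
  simp [mul_sub, sub_mul, Finset.sum_sub_distrib]

lemma exists_flow {T : Set E} {a b : V} (h : ReflTransGen (AdjVia tail head T) a b) :
    ∃ y : E → ℝ, (∀ e ∉ T, y e = 0) ∧
      bdry tail head y = Pi.single b 1 - Pi.single a 1 := by
  classical
  induction h with
  | refl => exact ⟨0, fun _ _ => rfl, by simp⟩
  | tail _ step ih =>
    obtain ⟨y, hyT, hy⟩ := ih
    obtain ⟨e, he, ⟨rfl, rfl⟩ | ⟨rfl, rfl⟩⟩ := step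
    · refine ⟨y + Pi.single e 1, fun f hf => ?_, by rw [map_add, hy, bdry_single]; abel⟩
      simp [hyT f hf, show f ≠ e by rintro rfl; exact hf he]
    · refine ⟨y - Pi.single e 1, fun f hf => ?_, by rw [map_sub, hy, bdry_single]; abel⟩
      simp [hyT f hf, show f ≠ e by rintro rfl; exact hf he]

lemma exists_cycle {T : Set E} {f : E} (hf : f ∉ T)
    (h : ReflTransGen (AdjVia tail head T) (head f) (tail f)) :
    ∃ x : E → ℝ, bdry tail head x = 0 ∧ x f = 1 ∧ ∀ e ∉ insert f T, x e = 0 := by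
  classical
  obtain ⟨y, hyT, hy⟩ := exists_flow h
  refine ⟨Pi.single f 1 + y, by rw [map_add, bdry_single, hy]; abel, by simp [hyT f hf], ?_⟩
  intro e he
  simp [hyT e fun h => he (Or.inr h), show e ≠ f from fun h => he (Or.inl h)]

end Boundary

section Rank

variable {V E : Type*} (tail head : E → V)

def supportedOn (T : Set E) : Submodule ℝ (E → ℝ) :=
  LinearMap.ker (LinearMap.funLeft ℝ ℝ ((↑) : (Tᶜ : Set E) → E))

lemma mem_supportedOn {T : Set E} {x : E → ℝ} :
    x ∈ supportedOn T ↔ ∀ e ∉ T, x e = 0 := by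
  simp [supportedOn, funext_iff, LinearMap.funLeft_apply]

lemma finrank_supportedOn [Fintype E] (T : Set E) :
    Module.finrank ℝ (supportedOn T) = T.ncard := by
  classical
  have hrn := LinearMap.finrank_range_add_finrank_ker
    (LinearMap.funLeft ℝ ℝ ((↑) : (Tᶜ : Set E) → E))
  rw [LinearMap.range_eq_top.2 (LinearMap.funLeft_surjective_of_injective _ _ _
    Subtype.val_injective), finrank_top, Module.finrank_fintype_fun_eq_card,
    Module.finrank_fintype_fun_eq_card, ← Nat.card_eq_fintype_card, Nat.card_coe_set_eq,
    ← Nat.card_eq_fintype_card] at hrn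
  have := Set.ncard_add_ncard_compl T
  rw [supportedOn]
  omega

noncomputable def vertexSum [Fintype V] : (V → ℝ) →ₗ[ℝ] ℝ :=
  ∑ v, LinearMap.proj v

lemma vertexSum_apply [Fintype V] (χ : V → ℝ) : vertexSum χ = ∑ v, χ v := by
  simp [vertexSum]

lemma finrank_ker_vertexSum [Fintype V] :
    Module.finrank ℝ (LinearMap.ker (vertexSum (V := V))) = Nat.card V - 1 := by
  classical
  rcases isEmpty_or_nonempty V with hV | ⟨⟨v⟩⟩
  · rw [Subsingleton.elim (LinearMap.ker _) ⊥]
    simp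
  · have hne : (vertexSum : Module.Dual ℝ (V → ℝ)) ≠ 0 := fun h => by
      simpa [vertexSum_apply] using LinearMap.congr_fun h (Pi.single v 1)
    have := Module.Dual.finrank_ker_add_one_of_ne_zero hne
    rw [Module.finrank_fintype_fun_eq_card, ← Nat.card_eq_fintype_card] at this
    omega

variable [Fintype V] [Fintype E] [DecidableEq V]

def IsAcyclicVia (T : Set E) : Prop :=
  ∀ x : E → ℝ, bdry tail head x = 0 → (∀ e ∉ T, x e = 0) → x = 0

variable {tail head}

lemma range_bdry_le_ker_vertexSum :
    LinearMap.range (bdry tail head) ≤ LinearMap.ker vertexSum := by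
  rintro _ ⟨x, rfl⟩
  simpa [vertexSum_apply] using sum_mul_bdry (tail := tail) (head := head) 1 x

lemma ker_vertexSum_le_range {T : Set E} (hT : GraphConnVia tail head T) :
    LinearMap.ker vertexSum ≤
      LinearMap.range (bdry tail head ∘ₗ (supportedOn T).subtype) := by
  intro χ hχ
  rcases isEmpty_or_nonempty V with hV | ⟨⟨v₀⟩⟩
  · rw [Subsingleton.elim χ 0]
    exact zero_mem _
  have hsum : ∑ v, χ v = 0 := by simpa [vertexSum_apply] using hχ
  have hχ : χ = ∑ v, χ v • (Pi.single v 1 - Pi.single v₀ 1) := by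
    ext w
    simp [Pi.single_apply, mul_sub, Finset.sum_sub_distrib, hsum]
  rw [hχ]
  refine sum_mem fun v _ => smul_mem _ _ ?_
  obtain ⟨y, hyT, hy⟩ := exists_flow (hT v₀ v)
  exact ⟨⟨y, mem_supportedOn.2 hyT⟩, hy⟩

lemma finrank_range_bdry_comp_subtype {T : Set E} (hT : GraphConnVia tail head T) :
    Module.finrank ℝ (LinearMap.range (bdry tail head ∘ₗ (supportedOn T).subtype)) =
      Nat.card V - 1 := by
  rw [← finrank_ker_vertexSum]
  exact le_antisymm
    (Submodule.finrank_mono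
      ((LinearMap.range_comp_le_range _ _).trans range_bdry_le_ker_vertexSum))
    (Submodule.finrank_mono (ker_vertexSum_le_range hT))

lemma ncard_eq_iff_isAcyclicVia {T : Set E} (hT : GraphConnVia tail head T) :
    T.ncard = Nat.card V - 1 ↔ IsAcyclicVia tail head T := by
  set L := bdry tail head ∘ₗ (supportedOn T).subtype
  have hrn := LinearMap.finrank_range_add_finrank_ker L
  rw [finrank_range_bdry_comp_subtype hT, finrank_supportedOn] at hrn
  have hker : IsAcyclicVia tail head T ↔ LinearMap.ker L = ⊥ := by
    rw [LinearMap.ker_eq_bot']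
    constructor
    · intro h x hx
      exact Subtype.ext (h x hx (mem_supportedOn.1 x.2))
    · intro h x hx hxT
      exact congrArg Subtype.val (h ⟨x, mem_supportedOn.2 hxT⟩ hx)
  rw [hker, ← Submodule.finrank_eq_zero]
  omega

end Rank

section Independence

variable {V E : Type*} [Fintype E] [DecidableEq V] (tail head : E → V)

noncomputable def edgeForm (e : E) : Module.Dual ℝ (LinearMap.ker (bdry tail head)) :=
  (LinearMap.proj e).comp (LinearMap.ker (bdry tail head)).subtype

@[simp]
lemma edgeForm_apply (e : E) (x : LinearMap.ker (bdry tail head)) :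
    edgeForm tail head e x = (x : E → ℝ) e :=
  rfl

lemma sum_cutVec_smul_edgeForm [Fintype V] (A : Set V) :
    ∑ e, cutVec tail head A e • edgeForm tail head e = 0 := by
  classical
  ext x
  have key := sum_mul_bdry (tail := tail) (head := head) (A.indicator 1) x
  rw [LinearMap.mem_ker.1 x.2] at key
  simp only [Pi.zero_apply, mul_zero, Finset.sum_const_zero] at key
  simp only [LinearMap.sum_apply, LinearMap.smul_apply, edgeForm_apply, zsmul_eq_mul,
    LinearMap.zero_apply, cutVec]
  rw [key]
  refine Finset.sum_congr rfl fun e _ => ?_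
  simp only [Set.indicator_apply, Pi.one_apply]
  split_ifs <;> simp

variable {tail head}

lemma edgeForm_ne_zero {f : E} (hf : ¬ IsBridge tail head f) : edgeForm tail head f ≠ 0 := by
  obtain ⟨x, hx, hxf, -⟩ :=
    exists_cycle (T := {e | e ≠ f}) (f := f) (by simp) (not_not.1 hf _ _)
  intro h0
  simpa [hxf] using LinearMap.congr_fun h0 ⟨x, hx⟩

lemma edgeForm_mem_span_int_of_not_reflTransGen [Fintype V] {T : Set E} {f : E}
    (h : ¬ ReflTransGen (AdjVia tail head (T \ {f})) (head f) (tail f)) :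
    edgeForm tail head f ∈ span ℤ (edgeForm tail head '' Tᶜ) :=
  mem_span_int_of_sum_zsmul_eq_zero (sum_cutVec_smul_edgeForm tail head _)
    (cutVec_eq_one ReflTransGen.refl h) fun _ he hef => cutVec_reach_eq_zero ⟨he, hef⟩

lemma IsBridge.edgeForm_eq_zero [Fintype V] (hconn : GraphConnVia tail head Set.univ) {f : E}
    (hf : IsBridge tail head f) : edgeForm tail head f = 0 := by
  simpa using edgeForm_mem_span_int_of_not_reflTransGen (hf.not_reflTransGen hconn)

lemma linearIndepOn_edgeForm_of_graphConnVia_compl {S : Set E}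
    (hS : GraphConnVia tail head Sᶜ) : LinearIndepOn ℝ (edgeForm tail head) S := by
  have hcyc (f : S) :
      ∃ x : E → ℝ, bdry tail head x = 0 ∧ x f = 1 ∧ ∀ e ∉ insert f.1 Sᶜ, x e = 0 :=
    exists_cycle (by simp) (hS _ _)
  choose x hx hxf hxS using hcyc
  refine LinearIndependent.of_pairwise_dual_eq_zero_one _
    (fun f => Module.Dual.eval ℝ _ ⟨x f, hx f⟩) (fun f g hfg => ?_) (fun f => hxf f)
  exact hxS f g (by simp [Subtype.val_injective.ne_iff, Ne.symm hfg])

lemma graphConnVia_compl_of_linearIndepOn [Fintype V] (hconn : GraphConnVia tail head Set.univ)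
    {S : Set E} (hS : LinearIndepOn ℝ (edgeForm tail head) S) : GraphConnVia tail head Sᶜ := by
  classical
  intro v w
  set A := {u | ReflTransGen (AdjVia tail head Sᶜ) v u}
  have hcompl : ∀ e ∉ S, cutVec tail head A e = 0 := fun _ he => cutVec_reach_eq_zero he
  have hrel : ∑ e ∈ S.toFinset, (cutVec tail head A e : ℝ) • edgeForm tail head e = 0 := by
    rw [Finset.sum_subset S.toFinset.subset_univ fun e _ he => by
      simp [hcompl e (by simpa using he)]]
    exact (Finset.sum_congr rfl fun _ _ => Int.cast_smul_eq_zsmul ℝ _ _).trans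
      (sum_cutVec_smul_edgeForm tail head A)
  have hcut (e : E) : cutVec tail head A e = 0 := by
    by_cases he : e ∈ S
    · exact_mod_cast linearIndepOn_finset_iff.1 (by simpa using hS) _ hrel e (by simp [he])
    · exact hcompl e he
  exact mem_of_reflTransGen_adjVia (fun e _ => cutVec_eq_zero_iff.1 (hcut e))
    ReflTransGen.refl (hconn v w)

lemma linearIndepOn_edgeForm_iff [Fintype V] (hconn : GraphConnVia tail head Set.univ)
    (S : Set E) :
    LinearIndepOn ℝ (edgeForm tail head) S ↔ GraphConnVia tail head Sᶜ :=
  ⟨graphConnVia_compl_of_linearIndepOn hconn, linearIndepOn_edgeForm_of_graphConnVia_compl⟩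

lemma span_edgeForm_eq_top_iff (S : Set E) :
    span ℝ (edgeForm tail head '' S) = ⊤ ↔ IsAcyclicVia tail head Sᶜ := by
  rw [span_eq_top_iff_forall_apply_eq_zero]
  simp only [Set.forall_mem_image, edgeForm_apply, IsAcyclicVia, Set.mem_compl_iff, not_not]
  constructor
  · intro h x hx hS
    exact congrArg Subtype.val (h ⟨x, hx⟩ hS)
  · intro h x hS
    exact Subtype.ext (h x x.2 hS)

end Independence

section SpanningTree

variable {V E : Type*} (tail head : E → V)

def IsSpanningTree (T : Set E) : Prop :=
  T.ncard = Nat.card V - 1 ∧ GraphConnVia tail head T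

variable [Fintype V] [Fintype E] [DecidableEq V] {tail head}

lemma isSpanningTree_iff {T : Set E} :
    IsSpanningTree tail head T ↔ GraphConnVia tail head T ∧ IsAcyclicVia tail head T :=
  ⟨fun ⟨hcard, hc⟩ => ⟨hc, (ncard_eq_iff_isAcyclicVia hc).1 hcard⟩,
    fun ⟨hc, hac⟩ => ⟨(ncard_eq_iff_isAcyclicVia hc).2 hac, hc⟩⟩

lemma IsSpanningTree.not_reflTransGen {T : Set E} (hT : IsSpanningTree tail head T) {f : E}
    (hf : f ∈ T) : ¬ ReflTransGen (AdjVia tail head (T \ {f})) (head f) (tail f) := by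
  intro h
  obtain ⟨x, hx, hxf, hxT⟩ := exists_cycle (by simp) h
  have hx0 := (isSpanningTree_iff.1 hT).2 x hx fun e he =>
    hxT e (by rintro (rfl | ⟨h, -⟩) <;> contradiction)
  simp [hx0] at hxf

lemma IsSpanningTree.edgeForm_mem_span_int {T : Set E} (hT : IsSpanningTree tail head T)
    (f : E) : edgeForm tail head f ∈ span ℤ (edgeForm tail head '' Tᶜ) := by
  by_cases hf : f ∈ T
  · exact edgeForm_mem_span_int_of_not_reflTransGen (hT.not_reflTransGen hf)
  · exact subset_span (Set.mem_image_of_mem _ hf)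

end SpanningTree

section NonBridge

variable {V E : Type*} [Fintype V] [Fintype E] [DecidableEq V] (tail head : E → V)

noncomputable def nonBridgeEdgeForm :
    {e : E // ¬ IsBridge tail head e} → Module.Dual ℝ (LinearMap.ker (bdry tail head)) :=
  edgeForm tail head ∘ Subtype.val

variable {tail head}

lemma span_nonBridgeEdgeForm_eq_top (hconn : GraphConnVia tail head Set.univ) :
    span ℝ (Set.range (nonBridgeEdgeForm tail head)) = ⊤ := by
  rw [nonBridgeEdgeForm, Set.range_comp, Subtype.range_coe_subtype, span_edgeForm_eq_top_iff]
  intro x hx hxS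
  ext e
  by_cases he : IsBridge tail head e
  · simpa using LinearMap.congr_fun (he.edgeForm_eq_zero hconn) ⟨x, hx⟩
  · exact hxS e (by simpa using he)

lemma maxLinIndep_nonBridgeEdgeForm_iff (hconn : GraphConnVia tail head Set.univ)
    (S : Set {e : E // ¬ IsBridge tail head e}) :
    MaxLinIndep (nonBridgeEdgeForm tail head) S ↔
      IsSpanningTree tail head (Subtype.val '' S)ᶜ := by
  have hindep : LinearIndepOn ℝ (edgeForm tail head ∘ Subtype.val) S ↔
      LinearIndepOn ℝ (edgeForm tail head) (Subtype.val '' S) :=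
    ⟨LinearIndepOn.image_of_comp _ _, fun h => h.comp_of_image Subtype.val_injective.injOn⟩
  rw [maxLinIndep_iff, span_nonBridgeEdgeForm_eq_top hconn, nonBridgeEdgeForm, hindep,
    isSpanningTree_iff, ← linearIndepOn_edgeForm_iff hconn, ← span_edgeForm_eq_top_iff,
    Set.image_comp]

lemma span_int_image_eq_of_maxLinIndep (hconn : GraphConnVia tail head Set.univ)
    {S : Set {e : E // ¬ IsBridge tail head e}}
    (hS : MaxLinIndep (nonBridgeEdgeForm tail head) S) :
    span ℤ ((nonBridgeEdgeForm tail head) '' S) =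
      span ℤ (Set.range (nonBridgeEdgeForm tail head)) := by
  refine le_antisymm (span_mono (Set.image_subset_range _ _)) (span_le.2 ?_)
  rintro _ ⟨e, rfl⟩
  simpa [nonBridgeEdgeForm, Set.image_image] using
    ((maxLinIndep_nonBridgeEdgeForm_iff hconn S).1 hS).edgeForm_mem_span_int e.1

lemma ncard_setOf_maxLinIndep_nonBridgeEdgeForm (hconn : GraphConnVia tail head Set.univ) :
    {S | MaxLinIndep (nonBridgeEdgeForm tail head) S}.ncard =
      {T | IsSpanningTree tail head T}.ncard := by
  have himage : (fun S => (Subtype.val '' S)ᶜ) ''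
      {S | MaxLinIndep (nonBridgeEdgeForm tail head) S} = {T | IsSpanningTree tail head T} := by
    ext T
    refine ⟨fun ⟨S, hS, hST⟩ => hST ▸ (maxLinIndep_nonBridgeEdgeForm_iff hconn S).1 hS,
      fun hT => ?_⟩
    have hval : Subtype.val '' (Subtype.val ⁻¹' Tᶜ : Set {e : E // ¬ IsBridge tail head e}) =
        Tᶜ := by
      rw [Set.image_preimage_eq_inter_range, Subtype.range_coe_subtype, Set.inter_eq_left]
      exact fun e he hb => he (hb.mem_of_graphConnVia hT.2)
    refine ⟨Subtype.val ⁻¹' Tᶜ, (maxLinIndep_nonBridgeEdgeForm_iff hconn _).2 ?_, ?_⟩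
    · rwa [hval, compl_compl]
    · simp only [hval, compl_compl]
  rw [← himage]
  exact (Set.ncard_image_of_injective _
    (compl_injective.comp (Set.image_injective.2 Subtype.val_injective))).symm

end NonBridge

theorem stmt7_general {V E : Type*} [Fintype V] [Fintype E] [DecidableEq V]
    (tail head : E → V) (hconn : GraphConnVia tail head Set.univ) :
    (∀ e : {e : E // ¬ IsBridge tail head e},
      ((LinearMap.proj e.1).comp (LinearMap.ker (bdry tail head)).subtype :
        Module.Dual ℝ (LinearMap.ker (bdry tail head))) ≠ 0) ∧
    Submodule.span ℝ (Set.range fun e : {e : E // ¬ IsBridge tail head e} =>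
      ((LinearMap.proj e.1).comp (LinearMap.ker (bdry tail head)).subtype :
        Module.Dual ℝ (LinearMap.ker (bdry tail head)))) = ⊤ ∧
    (∃ M : Submodule ℤ (Module.Dual ℝ (LinearMap.ker (bdry tail head))),
      ∀ S, MaxLinIndep (fun e : {e : E // ¬ IsBridge tail head e} =>
        ((LinearMap.proj e.1).comp (LinearMap.ker (bdry tail head)).subtype)) S →
        Submodule.span ℤ ((fun e : {e : E // ¬ IsBridge tail head e} =>
          ((LinearMap.proj e.1).comp (LinearMap.ker (bdry tail head)).subtype :
            Module.Dual ℝ (LinearMap.ker (bdry tail head)))) '' S) = M) ∧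
    Set.ncard {S | MaxLinIndep (fun e : {e : E // ¬ IsBridge tail head e} =>
        ((LinearMap.proj e.1).comp (LinearMap.ker (bdry tail head)).subtype :
          Module.Dual ℝ (LinearMap.ker (bdry tail head)))) S} =
      Set.ncard {T : Set E | T.ncard = Nat.card V - 1 ∧ GraphConnVia tail head T} :=
  ⟨fun e => edgeForm_ne_zero e.2, span_nonBridgeEdgeForm_eq_top hconn,
    ⟨_, fun _ hS => span_int_image_eq_of_maxLinIndep hconn hS⟩,
    ncard_setOf_maxLinIndep_nonBridgeEdgeForm hconn⟩

/-- The graphic unimodular system: the edge functionals restricted to the cycle space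
`F_Γ = Ker ∂`, excluding the bridges, form a unimodular system whose complexity is the
number of spanning trees of `Γ`. -/
theorem stmt7 {V E : Type*} [Fintype V] [Fintype E] [DecidableEq V] [DecidableEq E]
    (tail head : E → V) (hconn : GraphConnVia tail head Set.univ) :
    (∀ e : {e : E // ¬ IsBridge tail head e},
      ((LinearMap.proj e.1).comp (LinearMap.ker (bdry tail head)).subtype :
        Module.Dual ℝ (LinearMap.ker (bdry tail head))) ≠ 0) ∧
    Submodule.span ℝ (Set.range fun e : {e : E // ¬ IsBridge tail head e} =>
      ((LinearMap.proj e.1).comp (LinearMap.ker (bdry tail head)).subtype :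
        Module.Dual ℝ (LinearMap.ker (bdry tail head)))) = ⊤ ∧
    (∃ M : Submodule ℤ (Module.Dual ℝ (LinearMap.ker (bdry tail head))),
      ∀ S, MaxLinIndep (fun e : {e : E // ¬ IsBridge tail head e} =>
        ((LinearMap.proj e.1).comp (LinearMap.ker (bdry tail head)).subtype)) S →
        Submodule.span ℤ ((fun e : {e : E // ¬ IsBridge tail head e} =>
          ((LinearMap.proj e.1).comp (LinearMap.ker (bdry tail head)).subtype :
            Module.Dual ℝ (LinearMap.ker (bdry tail head)))) '' S) = M) ∧
    Set.ncard {S | MaxLinIndep (fun e : {e : E // ¬ IsBridge tail head e} =>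
        ((LinearMap.proj e.1).comp (LinearMap.ker (bdry tail head)).subtype :
          Module.Dual ℝ (LinearMap.ker (bdry tail head)))) S} =
      Set.ncard {T : Set E | T.ncard = Nat.card V - 1 ∧ GraphConnVia tail head T} :=
  stmt7_general tail head hconn
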